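/- Let θ < λ be regular with λ ∈ (θ, θ^{+ω}) or λ θ-inaccessible, and let D be a transitive θ-covering matrix on λ such that S(D) holds. Then CP(D) holds witnessed by a set A such that moreover [A]^{μ} is covered by D for every cardinal μ < λ (not just μ = θ). -/

import Mathlib

open Cardinal Set

/-- `C` is a club (closed and unbounded) subset of the ordinal `lam`. -/
def IsClubIn (C : Set Ordinal.{0}) (lam : Ordinal.{0}) : Prop :=
  (∀ γ ∈ C, γ < lam) ∧ (∀ α < lam, ∃ β ∈ C, α < β) ∧
    (∀ δ, δ < lam → δ ≠ 0 → (∀ α < δ, ∃ β ∈ C, α < β ∧ β < δ) → δ ∈ C)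

/-- `S` is a stationary subset of the ordinal `lam`. -/
def IsStationaryIn (S : Set Ordinal.{0}) (lam : Ordinal.{0}) : Prop :=
  (∀ γ ∈ S, γ < lam) ∧ ∀ C, IsClubIn C lam → (S ∩ C).Nonempty
/-- `D` is a `θ`-covering matrix on `lam` (`θ`, `lam` ordinals, typically `θ = θc.ord`
for a regular cardinal `θc`): entries `D i β` for `i < θ`, `β < lam` union up to `β`,
are monotone in `i`, and are directed under end-coverage. -/
def IsCovMatrix (θ lam : Ordinal.{0}) (D : Ordinal.{0} → Ordinal.{0} → Set Ordinal.{0}) : Prop :=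
  (∀ β < lam, (⋃ i ∈ Set.Iio θ, D i β) = Set.Iio β) ∧
  (∀ i j, i ≤ j → j < θ → ∀ β < lam, D i β ⊆ D j β) ∧
  (∀ β γ, β < γ → γ < lam → ∀ i < θ, ∃ j < θ, D i β ⊆ D j γ)

/-- `D` is uniform: each `D i β` contains a club in `β` for eventually all `i < θ`. -/
def IsUniformMatrix (θ lam : Ordinal.{0}) (D : Ordinal.{0} → Ordinal.{0} → Set Ordinal.{0}) : Prop :=
  ∀ β < lam, ∃ i₀ < θ, ∀ i, i₀ ≤ i → i < θ → ∃ C, IsClubIn C β ∧ C ⊆ D i β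

/-- `D` is transitive: `α ∈ D i β` implies `D i α ⊆ D i β`. -/
def IsTransMatrix (θ lam : Ordinal.{0}) (D : Ordinal.{0} → Ordinal.{0} → Set Ordinal.{0}) : Prop :=
  ∀ i < θ, ∀ β < lam, ∀ α ∈ D i β, D i α ⊆ D i β

/-- `D` is closed: each entry is closed under suprema of its subsets of size `≤ θ`. -/
def IsClosedMatrix (θ : Cardinal.{0}) (lam : Ordinal.{0})
    (D : Ordinal.{0} → Ordinal.{0} → Set Ordinal.{0}) : Prop :=
  ∀ i < θ.ord, ∀ β < lam, ∀ X ⊆ D i β, X.Nonempty → #X ≤ Cardinal.lift.{1} θ →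
    sSup X ∈ D i β

/-- `S(D)`: there is a stationary `S ⊆ lam` such that every `θ`-indexed family of
stationary subsets of `S` meets a single entry of the matrix `D`. -/
def MatrixS (θ : Cardinal.{0}) (lam : Ordinal.{0})
    (D : Ordinal.{0} → Ordinal.{0} → Set Ordinal.{0}) : Prop :=
  ∃ S, IsStationaryIn S lam ∧ ∀ Ss : Ordinal.{0} → Set Ordinal.{0},
    (∀ i < θ.ord, Ss i ⊆ S ∧ IsStationaryIn (Ss i) lam) →
    ∃ j < θ.ord, ∃ β < lam, ∀ i < θ.ord, (Ss i ∩ D j β).Nonempty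

/-- `CP(D)`: there is an unbounded `A ⊆ lam` such that every subset of `A` of size `θ`
is contained in a single entry of `D`. -/
def MatrixCP (θ : Cardinal.{0}) (lam : Ordinal.{0})
    (D : Ordinal.{0} → Ordinal.{0} → Set Ordinal.{0}) : Prop :=
  ∃ A : Set Ordinal.{0}, A ⊆ Set.Iio lam ∧ (∀ α < lam, ∃ β ∈ A, α < β) ∧
    ∀ Z ⊆ A, #Z = Cardinal.lift.{1} θ → ∃ i < θ.ord, ∃ β < lam, Z ⊆ D i β


/-! For every `ξ < lam` some column `i` makes `coverSet D S ξ i = {δ ∈ S | ξ ∈ D i δ}` stationary: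
otherwise `θ` clubs witnessing the failures, intersected above `ξ`, would meet `S` in some `δ > ξ`,
yet `ξ` lies in some `D i δ`. By pigeonhole a single column `i` serves unboundedly many `ξ`; these
form `A`. For `Z ⊆ A` with `|Z| ≤ θ`, `S(D)` yields one entry `D j β` meeting every `coverSet D S ξ i`
(`ξ ∈ Z`), and transitivity pulls `Z` into `D (max i j) β`.

For larger `Z`, suppose every `≤ θ`-sized subset of `Z` lies in one of fewer than `lam` covered sets.
Directedness moves all of them into entries of one column `D · γ`, and then so does `Z`: otherwise
pick `z_j ∈ Z \ D j γ` for each `j < θ`; the set of these `z_j` lies in some `D j γ`, containing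
`z_j`. Such a family is given by all `≤ θ`-sized subsets of `Z` when `|Z| ^ θ < lam`, and, by
induction on `|Z|`, by the initial segments of an enumeration of `Z` when `|Z|` is regular, as are
all cardinals strictly between `θ` and `θ⁺ⁿ`. -/

theorem Cardinal.IsRegular.exists_lt_ord_forall_lt {c : Cardinal.{0}} (hc : c.IsRegular)
    {ι : Type 1} (f : ι → Ordinal.{0}) (hι : #ι < Cardinal.lift.{1} c) (hf : ∀ i, f i < c.ord) :
    ∃ b < c.ord, ∀ i, f i < b := by
  refine ⟨⨆ i, f i + 1, Ordinal.lift_iSup_add_one_lt_of_lt_cof ?_ hf, fun i => ?_⟩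
  · rwa [← Ordinal.lift_cof, hc.cof_ord, Cardinal.lift_uzero]
  · have hbdd : BddAbove (range fun i => f i + 1) :=
      ⟨c.ord, by rintro _ ⟨j, rfl⟩; exact Order.add_one_le_of_lt (hf j)⟩
    exact (Order.lt_add_one_iff.2 le_rfl).trans_le (le_ciSup hbdd i)

theorem Cardinal.IsRegular.exists_unbounded_fiber {κ : Cardinal.{0}} (hκ : κ.IsRegular)
    {β : Type 1} (hβ : #β < Cardinal.lift.{1} κ) (g : Iio κ.ord → β) :
    ∃ b, ∀ α < κ.ord, ∃ ν : Iio κ.ord, α < ν ∧ g ν = b := by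
  by_contra! h
  choose α hα hαg using h
  obtain ⟨a, ha, hαa⟩ := hκ.exists_lt_ord_forall_lt α hβ hα
  exact hαg (g ⟨a, ha⟩) ⟨a, ha⟩ (hαa _) rfl

theorem IsClubIn.inter_Ioi {C : Set Ordinal.{0}} {lam ξ : Ordinal.{0}} (hC : IsClubIn C lam)
    (hξ : ξ < lam) : IsClubIn (C ∩ Ioi ξ) lam := by
  refine ⟨fun γ hγ => hC.1 γ hγ.1, fun α hα => ?_, fun δ hδ hδ0 hlim => ⟨?_, ?_⟩⟩
  · obtain ⟨β, hβ, hlt⟩ := hC.2.1 (max α ξ) (max_lt hα hξ)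
    exact ⟨β, ⟨hβ, (le_max_right α ξ).trans_lt hlt⟩, (le_max_left α ξ).trans_lt hlt⟩
  · refine hC.2.2 δ hδ hδ0 fun α hα => ?_
    obtain ⟨β, hβ, hαβ, hβδ⟩ := hlim α hα
    exact ⟨β, hβ.1, hαβ, hβδ⟩
  · obtain ⟨β, hβ, -, hβδ⟩ := hlim 0 (pos_iff_ne_zero.2 hδ0)
    exact (mem_Ioi.1 hβ.2).trans hβδ

theorem IsClubIn.nfp_mem {C : Set Ordinal.{0}} {lam : Ordinal.{0}} (hC : IsClubIn C lam)
    {g : Ordinal.{0} → Ordinal.{0}} (hg : ∀ x < lam, ∃ c ∈ C, x < c ∧ c < g x) {a : Ordinal.{0}}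
    (hlt : Ordinal.nfp g a < lam) (hne : Ordinal.nfp g a ≠ 0) : Ordinal.nfp g a ∈ C := by
  refine hC.2.2 _ hlt hne fun α hα => ?_
  obtain ⟨n, hn⟩ := Ordinal.lt_nfp_iff.1 hα
  obtain ⟨c, hc, hnc, hcg⟩ := hg _ ((Ordinal.iterate_le_nfp g a n).trans_lt hlt)
  refine ⟨c, hc, hn.trans hnc, hcg.trans_le ?_⟩
  simpa only [Function.iterate_succ_apply'] using Ordinal.iterate_le_nfp g a (n + 1)

theorem IsClubIn.exists_forall_mem_Ioo {lam : Cardinal.{0}} (hlam : lam.IsRegular) {ι : Type 1}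
    {C : ι → Set Ordinal.{0}} (hC : ∀ i, IsClubIn (C i) lam.ord) (hι : #ι < Cardinal.lift.{1} lam)
    {x : Ordinal.{0}} (hx : x < lam.ord) :
    ∃ y < lam.ord, ∀ i, ∃ c ∈ C i, x < c ∧ c < y := by
  choose c hc hxc using fun i => (hC i).2.1 x hx
  obtain ⟨y, hy, hcy⟩ := hlam.exists_lt_ord_forall_lt c hι fun i => (hC i).1 _ (hc i)
  exact ⟨y, hy, fun i => ⟨c i, hc i, hxc i, hcy i⟩⟩

theorem IsClubIn.iInter {lam : Cardinal.{0}} (hlam : lam.IsRegular) (hω : ℵ₀ < lam)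
    {ι : Type 1} [Nonempty ι] {C : ι → Set Ordinal.{0}} (hC : ∀ i, IsClubIn (C i) lam.ord)
    (hι : #ι < Cardinal.lift.{1} lam) : IsClubIn (⋂ i, C i) lam.ord := by
  refine ⟨fun γ hγ => (hC (Classical.arbitrary ι)).1 γ (mem_iInter.1 hγ _), fun α hα => ?_,
    fun δ hδ hδ0 hlim => mem_iInter.2 fun i => (hC i).2.2 δ hδ hδ0 fun β hβ => ?_⟩
  · choose! g hg hgC using fun x (hx : x < lam.ord) => IsClubIn.exists_forall_mem_Ioo hlam hC hι hx
    have hα1 : α + 1 < lam.ord := (Cardinal.isSuccLimit_ord hlam.aleph0_le).add_one_lt hα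
    have hαδ : α < Ordinal.nfp g (α + 1) :=
      (Order.lt_add_one_iff.2 le_rfl).trans_le (Ordinal.le_nfp g _)
    have hδ : Ordinal.nfp g (α + 1) < lam.ord :=
      Cardinal.nfp_lt_ord_of_isRegular hlam hω.ne' hg hα1
    exact ⟨_, mem_iInter.2 fun i => (hC i).nfp_mem (fun x hx => hgC x hx i) hδ
      (pos_iff_ne_zero.1 (zero_le.trans_lt hαδ)), hαδ⟩
  · obtain ⟨γ, hγ, hβγ, hγδ⟩ := hlim β hβ
    exact ⟨γ, mem_iInter.1 hγ i, hβγ, hγδ⟩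

theorem Cardinal.isRegular_of_lt_succ_iterate {θ μ : Cardinal} (hθ : ℵ₀ ≤ θ) {n : ℕ}
    (hθμ : θ < μ) (hμ : μ < Order.succ^[n] θ) : μ.IsRegular := by
  induction n with
  | zero => exact absurd hθμ hμ.not_gt
  | succ n ih =>
    rw [Function.iterate_succ_apply'] at hμ
    rcases (Order.lt_succ_iff.1 hμ).lt_or_eq with h | rfl
    · exact ih h
    · cases n with
      | zero => exact absurd hθμ (lt_irrefl _)
      | succ m =>
        rw [Function.iterate_succ_apply']
        exact isRegular_succ (hθ.trans (Order.le_succ_iterate m θ))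

theorem IsStationaryIn.pos {S : Set Ordinal.{0}} {lam : Ordinal.{0}} (hS : IsStationaryIn S lam) :
    0 < lam := by
  by_contra! h
  have hclub : IsClubIn ∅ lam := ⟨fun _ => False.elim,
    fun _ hα => ((hα.trans_le h).not_ge zero_le).elim,
    fun _ hδ => ((hδ.trans_le h).not_ge zero_le).elim⟩
  obtain ⟨_, -, h⟩ := hS.2 ∅ hclub
  exact h

theorem IsCovMatrix.exists_mem {θ lam : Ordinal.{0}} {D : Ordinal.{0} → Ordinal.{0} → Set Ordinal.{0}}
    (hD : IsCovMatrix θ lam D) {β z : Ordinal.{0}} (hβ : β < lam) (hz : z < β) :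
    ∃ i < θ, z ∈ D i β := by
  have hz' : z ∈ ⋃ i ∈ Iio θ, D i β := (hD.1 β hβ).symm ▸ hz
  simpa using hz'

theorem IsTransMatrix.mem_max {θ lam : Ordinal.{0}} {D : Ordinal.{0} → Ordinal.{0} → Set Ordinal.{0}}
    (hT : IsTransMatrix θ lam D) (hD : IsCovMatrix θ lam D) {i j z δ β : Ordinal.{0}}
    (hi : i < θ) (hj : j < θ) (hδ : δ < lam) (hβ : β < lam) (hz : z ∈ D i δ) (hδβ : δ ∈ D j β) :
    z ∈ D (max i j) β :=
  hT _ (max_lt hi hj) β hβ δ (hD.2.1 j _ (le_max_right i j) (max_lt hi hj) β hβ hδβ)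
    (hD.2.1 i _ (le_max_left i j) (max_lt hi hj) δ hδ hz)

def IsMatrixSWitness (θ : Cardinal.{0}) (lam : Ordinal.{0})
    (D : Ordinal.{0} → Ordinal.{0} → Set Ordinal.{0}) (S : Set Ordinal.{0}) : Prop :=
  IsStationaryIn S lam ∧ ∀ Ss : Ordinal.{0} → Set Ordinal.{0},
    (∀ i < θ.ord, Ss i ⊆ S ∧ IsStationaryIn (Ss i) lam) →
    ∃ j < θ.ord, ∃ β < lam, ∀ i < θ.ord, (Ss i ∩ D j β).Nonempty

def coverSet (D : Ordinal.{0} → Ordinal.{0} → Set Ordinal.{0}) (S : Set Ordinal.{0})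
    (ξ i : Ordinal.{0}) : Set Ordinal.{0} :=
  {δ ∈ S | ξ ∈ D i δ}

def CoveredBy (θ lam : Ordinal.{0}) (D : Ordinal.{0} → Ordinal.{0} → Set Ordinal.{0})
    (Z : Set Ordinal.{0}) : Prop :=
  ∃ i < θ, ∃ β < lam, Z ⊆ D i β

section Matrix

variable {θ lam : Cardinal.{0}} {D : Ordinal.{0} → Ordinal.{0} → Set Ordinal.{0}}
  {S : Set Ordinal.{0}}

theorem exists_isStationaryIn_coverSet (hθ : θ ≠ 0) (hlam : lam.IsRegular) (hω : ℵ₀ < lam)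
    (hθlam : θ < lam) (hD : IsCovMatrix θ.ord lam.ord D) (hS : IsStationaryIn S lam.ord)
    {ξ : Ordinal.{0}} (hξ : ξ < lam.ord) :
    ∃ i < θ.ord, IsStationaryIn (coverSet D S ξ i) lam.ord := by
  by_contra! h
  have hdisj : ∀ i : Iio θ.ord, ∃ C, IsClubIn C lam.ord ∧ ¬(coverSet D S ξ i ∩ C).Nonempty := by
    intro i
    have hi := h i i.2
    simp only [IsStationaryIn, not_and, not_forall, exists_prop] at hi
    exact hi fun γ hγ => hS.1 γ hγ.1
  choose C hC hCS using hdisj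
  have hθ0 : (0 : Ordinal) < θ.ord := Cardinal.ord_pos.2 (pos_iff_ne_zero.2 hθ)
  have : Nonempty (Iio θ.ord) := ⟨⟨0, hθ0⟩⟩
  have hcard : #(Iio θ.ord) < Cardinal.lift.{1} lam := by
    rw [Cardinal.mk_Iio_ordinal, Cardinal.card_ord]
    exact Cardinal.lift_lt.2 hθlam
  obtain ⟨δ, hδS, hδC⟩ := hS.2 _ (IsClubIn.iInter hlam hω (fun i => (hC i).inter_Ioi hξ) hcard)
  have hδ := mem_iInter.1 hδC
  obtain ⟨i, hi, hξδ⟩ := hD.exists_mem (hS.1 δ hδS) (hδ ⟨0, hθ0⟩).2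
  exact hCS ⟨i, hi⟩ ⟨δ, ⟨hδS, hξδ⟩, (hδ ⟨i, hi⟩).1⟩

theorem exists_unbounded_isStationaryIn_coverSet (hθ : θ ≠ 0) (hlam : lam.IsRegular)
    (hω : ℵ₀ < lam) (hθlam : θ < lam) (hD : IsCovMatrix θ.ord lam.ord D)
    (hS : IsStationaryIn S lam.ord) :
    ∃ i < θ.ord, ∀ α < lam.ord,
      ∃ ξ ∈ {ξ | ξ < lam.ord ∧ IsStationaryIn (coverSet D S ξ i) lam.ord}, α < ξ := by
  choose! i hi hstat using fun ξ (hξ : ξ < lam.ord) =>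
    exists_isStationaryIn_coverSet hθ hlam hω hθlam hD hS hξ
  have hcard : #(Iio θ.ord) < Cardinal.lift.{1} lam := by
    rw [Cardinal.mk_Iio_ordinal, Cardinal.card_ord]
    exact Cardinal.lift_lt.2 hθlam
  obtain ⟨⟨j, hj⟩, hfib⟩ := hlam.exists_unbounded_fiber hcard fun ξ => ⟨i ξ, hi ξ ξ.2⟩
  refine ⟨j, hj, fun α hα => ?_⟩
  obtain ⟨ξ, hαξ, hξj⟩ := hfib α hα
  have hij : i ξ = j := congrArg Subtype.val hξj
  exact ⟨ξ, ⟨ξ.2, hij ▸ hstat ξ ξ.2⟩, hαξ⟩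

theorem exists_forall_mem_of_isStationaryIn_coverSet (hD : IsCovMatrix θ.ord lam.ord D)
    (hT : IsTransMatrix θ.ord lam.ord D) (hS : IsMatrixSWitness θ lam.ord D S) {i : Ordinal.{0}}
    (hi : i < θ.ord) {f : Ordinal.{0} → Ordinal.{0}}
    (hf : ∀ k < θ.ord, IsStationaryIn (coverSet D S (f k) i) lam.ord) :
    ∃ j < θ.ord, ∃ β < lam.ord, ∀ k < θ.ord, f k ∈ D j β := by
  obtain ⟨j, hj, β, hβ, hmeet⟩ :=
    hS.2 (fun k => coverSet D S (f k) i) fun k hk => ⟨fun _ hδ => hδ.1, hf k hk⟩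
  refine ⟨max i j, max_lt hi hj, β, hβ, fun k hk => ?_⟩
  obtain ⟨δ, ⟨hδS, hkδ⟩, hδβ⟩ := hmeet k hk
  exact hT.mem_max hD hi hj (hS.1.1 δ hδS) hβ hkδ hδβ

theorem coveredBy_of_mk_le (hD : IsCovMatrix θ.ord lam.ord D)
    (hT : IsTransMatrix θ.ord lam.ord D) (hS : IsMatrixSWitness θ lam.ord D S) {i : Ordinal.{0}}
    (hi : i < θ.ord) {Z : Set Ordinal.{0}}
    (hZ : ∀ ξ ∈ Z, IsStationaryIn (coverSet D S ξ i) lam.ord) (hZθ : #Z ≤ Cardinal.lift.{1} θ) :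
    CoveredBy θ.ord lam.ord D Z := by
  rcases Z.eq_empty_or_nonempty with rfl | ⟨z₀, hz₀⟩
  · exact ⟨i, hi, 0, hS.1.pos, empty_subset _⟩
  have : Nonempty Z := ⟨⟨z₀, hz₀⟩⟩
  obtain ⟨g⟩ : Nonempty (Z ↪ Iio θ.ord) := by
    rwa [← Cardinal.le_def, Cardinal.mk_Iio_ordinal, Cardinal.card_ord]
  let f : Ordinal.{0} → Ordinal.{0} := fun k => (Function.invFun (fun z : Z => (g z : Ordinal)) k : Z)
  have hfg : ∀ z : Z, f (g z) = z := fun z =>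
    congrArg Subtype.val (Function.leftInverse_invFun (Subtype.val_injective.comp g.injective) z)
  obtain ⟨j, hj, β, hβ, hfD⟩ := exists_forall_mem_of_isStationaryIn_coverSet hD hT hS hi
    (f := f) fun k _ => hZ _ (Function.invFun (fun z : Z => (g z : Ordinal)) k).2
  exact ⟨j, hj, β, hβ, fun z hz => by simpa only [hfg] using hfD _ (g ⟨z, hz⟩).2⟩

theorem exists_subset_of_forall_mk_le {E : Ordinal.{0} → Set Ordinal.{0}} {Z : Set Ordinal.{0}}
    (h : ∀ t ⊆ Z, #t ≤ Cardinal.lift.{1} θ → ∃ j < θ.ord, t ⊆ E j) :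
    ∃ j < θ.ord, Z ⊆ E j := by
  by_contra! hZ
  choose z hzZ hzE using fun j : Iio θ.ord => not_subset.1 (hZ j j.2)
  have hcard : #(range z) ≤ Cardinal.lift.{1} θ := by
    simpa [Cardinal.mk_Iio_ordinal] using mk_range_le (f := z)
  obtain ⟨j, hj, hsub⟩ := h (range z) (range_subset_iff.2 hzZ) hcard
  exact hzE ⟨j, hj⟩ (hsub (mem_range_self _))

theorem coveredBy_of_subset_family (hlam : lam.IsRegular) (hD : IsCovMatrix θ.ord lam.ord D)
    {ι : Type 1} {Y : ι → Set Ordinal.{0}} (hι : #ι < Cardinal.lift.{1} lam)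
    (hY : ∀ k, CoveredBy θ.ord lam.ord D (Y k)) {Z : Set Ordinal.{0}}
    (hZ : ∀ t ⊆ Z, #t ≤ Cardinal.lift.{1} θ → ∃ k, t ⊆ Y k) : CoveredBy θ.ord lam.ord D Z := by
  choose i hi β hβ hYβ using hY
  obtain ⟨γ, hγ, hβγ⟩ := hlam.exists_lt_ord_forall_lt β hι hβ
  choose j hj hij using fun k => hD.2.2 (β k) γ (hβγ k) hγ (i k) (hi k)
  obtain ⟨j₀, hj₀, hZj⟩ := exists_subset_of_forall_mk_le (E := fun j => D j γ) fun t ht htθ => by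
    obtain ⟨k, hk⟩ := hZ t ht htθ
    exact ⟨j k, hj k, hk.trans ((hYβ k).trans (hij k))⟩
  exact ⟨j₀, hj₀, γ, hγ, hZj⟩

theorem coveredBy_of_isRegular (hlam : lam.IsRegular) (hD : IsCovMatrix θ.ord lam.ord D)
    {μ : Cardinal.{0}} (hμ : μ.IsRegular) (hθμ : θ < μ) (hμlam : μ < lam) {Z : Set Ordinal.{0}}
    (hZ : #Z = Cardinal.lift.{1} μ)
    (hsmall : ∀ Y ⊆ Z, #Y < Cardinal.lift.{1} μ → CoveredBy θ.ord lam.ord D Y) :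
    CoveredBy θ.ord lam.ord D Z := by
  obtain ⟨e⟩ : Nonempty (Iio μ.ord ≃ Z) :=
    Cardinal.eq.1 (by rw [Cardinal.mk_Iio_ordinal, Cardinal.card_ord, hZ])
  let Y (ν : Iio μ.ord) : Set Ordinal.{0} := (fun k => (e k : Ordinal)) '' Iio ν
  have hYZ : ∀ ν, Y ν ⊆ Z := by
    rintro ν _ ⟨k, -, rfl⟩
    exact (e k).2
  have hYμ : ∀ ν, #(Y ν) < Cardinal.lift.{1} μ := fun ν =>
    calc #(Y ν) ≤ #(Iio ν) := mk_image_le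
      _ ≤ #(Iio ν.1) := Cardinal.mk_le_of_injective (f := fun k => ⟨k.1.1, k.2⟩)
          fun k l hkl => Subtype.ext (Subtype.ext (congrArg Subtype.val hkl :))
      _ = Cardinal.lift.{1} ν.1.card := Cardinal.mk_Iio_ordinal _
      _ < Cardinal.lift.{1} μ := Cardinal.lift_lt.2 (Cardinal.lt_ord.1 ν.2)
  have hcard : #(Iio μ.ord) < Cardinal.lift.{1} lam := by
    rw [Cardinal.mk_Iio_ordinal, Cardinal.card_ord]
    exact Cardinal.lift_lt.2 hμlam
  refine coveredBy_of_subset_family hlam hD hcard (fun ν => hsmall _ (hYZ ν) (hYμ ν))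
    fun t ht htθ => ?_
  obtain ⟨b, hb, hlt⟩ := hμ.exists_lt_ord_forall_lt (fun z : t => (e.symm ⟨z, ht z.2⟩ : Ordinal))
    (htθ.trans_lt (Cardinal.lift_lt.2 hθμ)) fun z => (e.symm _).2
  exact ⟨⟨b, hb⟩, fun z hz => ⟨e.symm ⟨z, ht hz⟩, hlt ⟨z, hz⟩, by simp⟩⟩

theorem coveredBy_of_mk_lt_of_forall_isRegular (hlam : lam.IsRegular)
    (hD : IsCovMatrix θ.ord lam.ord D) (hreg : ∀ μ, θ < μ → μ < lam → μ.IsRegular)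
    {A : Set Ordinal.{0}}
    (hbase : ∀ Z ⊆ A, #Z ≤ Cardinal.lift.{1} θ → CoveredBy θ.ord lam.ord D Z) :
    ∀ Z ⊆ A, #Z < Cardinal.lift.{1} lam → CoveredBy θ.ord lam.ord D Z := by
  suffices h : ∀ μ < lam, ∀ Z ⊆ A, #Z = Cardinal.lift.{1} μ → CoveredBy θ.ord lam.ord D Z by
    intro Z hZA hZ
    obtain ⟨μ, hμ⟩ := Cardinal.mem_range_lift_of_le hZ.le
    exact h μ (Cardinal.lift_lt.1 (hμ ▸ hZ)) Z hZA hμ.symm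
  intro μ
  induction μ using WellFoundedLT.induction with
  | _ μ IH =>
    intro hμ Z hZA hZ
    rcases le_or_gt μ θ with hμθ | hθμ
    · exact hbase Z hZA (hZ ▸ Cardinal.lift_le.2 hμθ)
    refine coveredBy_of_isRegular hlam hD (hreg μ hθμ hμ) hθμ hμ hZ fun Y hYZ hY => ?_
    obtain ⟨ν, hν⟩ := Cardinal.mem_range_lift_of_le hY.le
    have hνμ : ν < μ := Cardinal.lift_lt.1 (hν ▸ hY)
    exact IH ν hνμ (hνμ.trans hμ) Y (hYZ.trans hZA) hν.symm

theorem coveredBy_of_mk_lt_of_pow_lt (hlam : lam.IsRegular) (hω : ℵ₀ < lam)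
    (hD : IsCovMatrix θ.ord lam.ord D) (hpow : ∀ ζ < lam, ζ ^ θ < lam) {A : Set Ordinal.{0}}
    (hbase : ∀ Z ⊆ A, #Z ≤ Cardinal.lift.{1} θ → CoveredBy θ.ord lam.ord D Z) :
    ∀ Z ⊆ A, #Z < Cardinal.lift.{1} lam → CoveredBy θ.ord lam.ord D Z := by
  intro Z hZA hZ
  obtain ⟨μ, hμ⟩ := Cardinal.mem_range_lift_of_le hZ.le
  have hcount : #{t : Set Ordinal.{0} // t ⊆ Z ∧ #t ≤ Cardinal.lift.{1} θ} <
      Cardinal.lift.{1} lam :=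
    calc _ ≤ max #Z ℵ₀ ^ Cardinal.lift.{1} θ := Cardinal.mk_bounded_subset_le Z _
      _ = Cardinal.lift.{1} (max μ ℵ₀ ^ θ) := by
          rw [← hμ, Cardinal.lift_power, Cardinal.lift_max, Cardinal.lift_aleph0]
      _ < Cardinal.lift.{1} lam :=
          Cardinal.lift_lt.2 (hpow _ (max_lt (Cardinal.lift_lt.1 (hμ ▸ hZ)) hω))
  exact coveredBy_of_subset_family hlam hD hcount (fun t => hbase t (t.2.1.trans hZA) t.2.2)
    fun t ht htθ => ⟨⟨t, ht, htθ⟩, subset_rfl⟩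

end Matrix

/-- If `lam` is regular and either `θ⁺ⁿ` (`1 ≤ n`) or `θ`-inaccessible, `D` is a transitive
`θ`-covering matrix on `lam`, and `S(D)` holds, then `CP(D)` holds, witnessed by an
unbounded `A` such that moreover `[A]^μ` is covered by `D` for every cardinal `μ < lam`. -/
theorem matrixCP_strong_of_matrixS (θ lam : Cardinal.{0})
    (hθ : θ.IsRegular) (hlam : lam.IsRegular) (hθlam : θ < lam)
    (hcase : (∃ n : ℕ, 1 ≤ n ∧ lam = (Order.succ)^[n] θ) ∨ (∀ ζ < lam, ζ ^ θ < lam))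
    (D : Ordinal.{0} → Ordinal.{0} → Set Ordinal.{0})
    (hmat : IsCovMatrix θ.ord lam.ord D)
    (htrans : IsTransMatrix θ.ord lam.ord D)
    (hS : MatrixS θ lam.ord D) :
    ∃ A : Set Ordinal.{0}, A ⊆ Set.Iio lam.ord ∧ (∀ α < lam.ord, ∃ β ∈ A, α < β) ∧
      ∀ μ : Cardinal.{0}, μ < lam →
        ∀ Z ⊆ A, #Z = Cardinal.lift.{1} μ → ∃ i < θ.ord, ∃ β < lam.ord, Z ⊆ D i β := by
  obtain ⟨S, hS⟩ := hS
  have hω : ℵ₀ < lam := hθ.aleph0_le.trans_lt hθlam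
  obtain ⟨i, hi, hA⟩ := exists_unbounded_isStationaryIn_coverSet hθ.pos.ne' hlam hω hθlam hmat hS.1
  set A := {ξ | ξ < lam.ord ∧ IsStationaryIn (coverSet D S ξ i) lam.ord}
  have hbase : ∀ Z ⊆ A, #Z ≤ Cardinal.lift.{1} θ → CoveredBy θ.ord lam.ord D Z :=
    fun Z hZA => coveredBy_of_mk_le hmat htrans hS hi fun ξ hξ => (hZA hξ).2
  have hcover : ∀ Z ⊆ A, #Z < Cardinal.lift.{1} lam → CoveredBy θ.ord lam.ord D Z := by
    rcases hcase with ⟨n, -, rfl⟩ | hpow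
    · exact coveredBy_of_mk_lt_of_forall_isRegular hlam hmat
        (fun μ => Cardinal.isRegular_of_lt_succ_iterate hθ.aleph0_le) hbase
    · exact coveredBy_of_mk_lt_of_pow_lt hlam hω hmat hpow hbase
  exact ⟨A, fun ξ hξ => hξ.1, hA, fun μ hμ Z hZA hZ =>
    hcover Z hZA (hZ ▸ Cardinal.lift_lt.2 hμ)⟩
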